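/- arXiv:1305.1892 — 3 statements merged into one kernel-verified Lean document; each statement's English description precedes it below -/
import Mathlib

section
/- Kummer's transformation holds: for all complex a, b with b not a nonpositive integer and all complex z, ₁F₁(a; b; z) = e^z ₁F₁(b−a; b; −z). -/
/-- The Kummer confluent hypergeometric function `₁F₁(a; b; z)`. -/
noncomputable def kummerM (a b : ℂ) (z : ℂ) : ℂ :=
  ∑' k : ℕ, (∏ j ∈ Finset.range k, (a + j)) / (∏ j ∈ Finset.range k, (b + j)) *
    z ^ k / (k.factorial : ℂ)

/-!
Multiply the exponential series by the series of `₁F₁(b - a; b; -z)`; both converge absolutely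
(the second by the ratio test), so their Cauchy product converges to `e^z ₁F₁(b - a; b; -z)`.
After clearing `(b)ₙ n!`, equality of the `n`-th coefficients with those of `₁F₁(a; b; z)` reads
`∑ⱼ C(n, j) (-1)ʲ (b - a)ⱼ (b + j)ₙ₋ⱼ = (a)ₙ`. Writing `(-1)ʲ (b - a)ⱼ` and `(b + j)ₙ₋ⱼ` as falling
factorials of `a - b` and of `b + n - 1`, this is the Chu–Vandermonde identity for falling
factorials, evaluated at `(a - b) + (b + n - 1)`.
-/

open Finset Filter Polynomial Topology
open scoped Nat

section Pochhammer

variable {R : Type*} [CommRing R]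

theorem descPochhammer_smeval_eq_prod_range (x : R) (n : ℕ) :
    (descPochhammer ℤ n).smeval x = ∏ i ∈ range n, (x - i) := by
  rw [← aeval_eq_smeval, aeval_def, ← eval_map, descPochhammer_map,
    descPochhammer_eval_eq_prod_range]

theorem prod_range_add_sub_natCast_eq_sum_antidiagonal (x y : R) (n : ℕ) :
    ∏ i ∈ range n, (x + y - i) = ∑ p ∈ antidiagonal n,
      n.choose p.1 * ((∏ i ∈ range p.1, (x - i)) * ∏ i ∈ range p.2, (y - i)) := by
  simpa only [descPochhammer_smeval_eq_prod_range] using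
    Ring.descPochhammer_smeval_add n (Commute.all x y)

theorem prod_range_add_sub_one_sub_natCast (x : R) (n : ℕ) :
    ∏ i ∈ range n, (x + n - 1 - i) = ∏ i ∈ range n, (x + i) := by
  rw [← prod_range_reflect (fun i : ℕ => x + i)]
  refine prod_congr rfl fun i hi => ?_
  rw [mem_range] at hi
  rw [Nat.cast_sub (by omega), Nat.cast_sub (by omega)]
  push_cast
  ring

theorem sum_antidiagonal_choose_mul_prod_range_add (b c : R) (n : ℕ) :
    ∑ p ∈ antidiagonal n, n.choose p.1 * (∏ i ∈ range p.1, (b + p.2 + i)) *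
      ((-1) ^ p.2 * ∏ i ∈ range p.2, (c + i)) = ∏ i ∈ range n, (b - c + i) := by
  calc _ = ∑ p ∈ antidiagonal n, n.choose p.1 *
          ((∏ i ∈ range p.1, (b + n - 1 - i)) * ∏ i ∈ range p.2, (-c - i)) := by
        refine sum_congr rfl fun p hp => ?_
        rw [HasAntidiagonal.mem_antidiagonal] at hp
        have hneg : ∏ i ∈ range p.2, (-c - i) = (-1) ^ p.2 * ∏ i ∈ range p.2, (c + i) := by
          simpa only [neg_add', card_range] using prod_neg (s := range p.2) fun i : ℕ => c + i
        rw [hneg, ← hp, ← prod_range_add_sub_one_sub_natCast (b + p.2)]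
        push_cast
        ring_nf
    _ = ∏ i ∈ range n, (b + n - 1 + -c - i) :=
        (prod_range_add_sub_natCast_eq_sum_antidiagonal _ _ n).symm
    _ = ∏ i ∈ range n, (b - c + i) := by
        rw [← prod_range_add_sub_one_sub_natCast]
        ring_nf

end Pochhammer

theorem summable_norm_of_succ_eq_mul {α : Type*} [SeminormedRing α] {f r : ℕ → α}
    (hr : Tendsto r atTop (𝓝 0)) (hf : ∀ k, f (k + 1) = r k * f k) :
    Summable fun k => ‖f k‖ := by
  refine summable_of_ratio_norm_eventually_le (r := 1 / 2) (by norm_num) ?_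
  filter_upwards [(tendsto_zero_iff_norm_tendsto_zero.1 hr).eventually_le_const
    (by norm_num : (0 : ℝ) < 1 / 2)] with k hk
  rw [norm_norm, norm_norm, hf]
  exact (norm_mul_le _ _).trans (mul_le_mul_of_nonneg_right hk (norm_nonneg _))

section KummerTerm

variable {𝕜 : Type*}

noncomputable def kummerTerm [Field 𝕜] (a b z : 𝕜) (k : ℕ) : 𝕜 :=
  (∏ j ∈ range k, (a + j)) / (∏ j ∈ range k, (b + j)) * z ^ k / k !

theorem kummerM_eq_tsum_kummerTerm (a b z : ℂ) :
    kummerM a b z = ∑' k, kummerTerm a b z k :=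
  rfl

theorem kummerTerm_succ [Field 𝕜] (a b z : 𝕜) (k : ℕ) :
    kummerTerm a b z (k + 1) = (a + k) / (b + k) * (z / (k + 1)) * kummerTerm a b z k := by
  simp only [kummerTerm, prod_range_succ, Nat.factorial_succ, pow_succ]
  push_cast
  simp only [div_eq_mul_inv, mul_inv]
  ring

theorem summable_norm_kummerTerm [RCLike 𝕜] (a b z : 𝕜) :
    Summable fun k => ‖kummerTerm a b z k‖ := by
  refine summable_norm_of_succ_eq_mul ?_ (kummerTerm_succ a b z)
  have hfrac := tendsto_add_mul_div_add_mul_atTop_nhds a b 1 (one_ne_zero (α := 𝕜))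
  have hdiv := (tendsto_one_div_add_atTop_nhds_zero_nat (𝕜 := 𝕜)).const_mul z
  simpa [div_eq_mul_inv] using hfrac.mul hdiv

theorem sum_antidiagonal_pow_div_factorial_mul_kummerTerm [Field 𝕜] [CharZero 𝕜] {b : 𝕜}
    (hb : ∀ n : ℕ, b ≠ -n) (a z : 𝕜) (n : ℕ) :
    ∑ p ∈ antidiagonal n, z ^ p.1 / p.1 ! * kummerTerm (b - a) b (-z) p.2 =
      kummerTerm a b z n := by
  have hpoch : ∀ m k : ℕ, ∏ i ∈ range k, (b + m + i) ≠ 0 := fun m k =>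
    prod_ne_zero_iff.2 fun i _ h => hb (m + i) (by push_cast; linear_combination h)
  calc _ = ∑ p ∈ antidiagonal n, n.choose p.1 * (∏ i ∈ range p.1, (b + p.2 + i)) *
          ((-1) ^ p.2 * ∏ i ∈ range p.2, (b - a + i)) *
          (z ^ n / ((∏ i ∈ range n, (b + i)) * n !)) := by
        refine sum_congr rfl fun p hp => ?_
        rw [HasAntidiagonal.mem_antidiagonal] at hp
        subst hp
        have hb₀ := hpoch 0 p.2
        have hb₁ := hpoch p.2 p.1
        have hchoose : ((p.2 + p.1).choose p.1 : 𝕜) ≠ 0 :=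
          Nat.cast_ne_zero.2 (Nat.choose_pos (Nat.le_add_left _ _)).ne'
        simp only [Nat.cast_zero, add_zero] at hb₀
        rw [add_comm p.1, prod_range_add, ← Nat.add_choose_mul_factorial_mul_factorial p.2 p.1]
        simp only [kummerTerm, Nat.cast_mul, Nat.cast_add, ← add_assoc, neg_pow z, pow_add]
        field_simp
    _ = kummerTerm a b z n := by
        rw [← sum_mul, sum_antidiagonal_choose_mul_prod_range_add, sub_sub_cancel, kummerTerm]
        field_simp

end KummerTerm

/-- Kummer's transformation `₁F₁(a; b; z) = e^z ₁F₁(b−a; b; −z)`. -/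
theorem stmt_8 (a b : ℂ) (hb : ∀ n : ℕ, b ≠ -n) (z : ℂ) :
    kummerM a b z = Complex.exp z * kummerM (b - a) b (-z) := by
  rw [kummerM_eq_tsum_kummerTerm, kummerM_eq_tsum_kummerTerm, Complex.exp_eq_exp_ℂ,
    NormedSpace.exp_eq_tsum_div, tsum_mul_tsum_eq_tsum_sum_antidiagonal_of_summable_norm
      (NormedSpace.norm_expSeries_div_summable z) (summable_norm_kummerTerm _ _ _)]
  exact tsum_congr fun n => (sum_antidiagonal_pow_div_factorial_mul_kummerTerm hb a z n).symm
end

section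
/- Define B_n^{(b)}(x), for integer b ≥ 1, by Σ_{n≥0} B_n^{(b)}(x) z^n/n! = e^{xz}/Φ_{1,b}(z) where Φ_{1,b}(z) = (b!/z^b)(e^z − Σ_{s<b} z^s/s!). Then Dilcher's recursion holds: for all k ≥ b and all x, B_k^{(b)}(x+1) = Σ_{p=0}^{b−1} C(k,p) B_{k−p}^{(b)}(x) + C(k,b) x^{k−b}. -/
/-!
Writing `egf f = Σ f n zⁿ/n!`, the generating function identity reads
`egf B(y) · Φ = egf (yⁿ)`. Since `egf ((x+1)ⁿ) = eᶻ · egf (xⁿ)`, cancelling `Φ` gives the binomial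
transform `B_k(x+1) = Σ_{p ≤ k} C(k,p) B_{k-p}(x)`. The terms with `p ≥ b` add up to
`C(k,b) x^{k-b}`: up to the factor `k!/b!` they form the coefficient of `z^{k-b}` in
`Φ · egf B(x) = egf (xⁿ)`.
-/

open PowerSeries

/-- The power series of `Φ_{1,b}(z) = (b!/z^b)(e^z − Σ_{s<b} z^s/s!) = Σ_k b!/(b+k)! z^k`. -/
noncomputable def Phi1bSeries (b : ℕ) : PowerSeries ℝ :=
  PowerSeries.mk fun k => (b.factorial : ℝ) / ((b + k).factorial : ℝ)

open Finset

noncomputable def egf {K : Type*} [Field K] (f : ℕ → K) : PowerSeries K :=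
  mk fun n => f n / n.factorial

section Egf

variable {K : Type*} [Field K] [CharZero K]

theorem egf_injective : Function.Injective (egf : (ℕ → K) → PowerSeries K) := by
  intro f g h
  funext n
  have hn := congrArg (coeff n) h
  simp only [egf, coeff_mk] at hn
  exact (div_left_inj' (Nat.cast_ne_zero.mpr n.factorial_ne_zero)).mp hn

theorem egf_mul_egf (f g : ℕ → K) :
    egf f * egf g = egf fun n => ∑ p ∈ range (n + 1), (n.choose p : K) * f p * g (n - p) := by
  ext n
  rw [coeff_mul, Nat.sum_antidiagonal_eq_sum_range_succ (fun i j => coeff i (egf f) * coeff j (egf g))]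
  simp only [egf, coeff_mk, sum_div]
  refine sum_congr rfl fun p hp => ?_
  have hn : (n.factorial : K) ≠ 0 := Nat.cast_ne_zero.mpr n.factorial_ne_zero
  rw [Nat.cast_choose K (mem_range_succ_iff.mp hp)]
  field_simp

theorem egf_add_pow (x y : K) :
    (egf fun n => (x + y) ^ n) = (egf fun n => x ^ n) * egf fun n => y ^ n := by
  rw [egf_mul_egf]
  congr 1
  funext n
  rw [add_pow]
  exact sum_congr rfl fun p _ => by ring

end Egf

theorem constantCoeff_phi1bSeries (b : ℕ) : constantCoeff (Phi1bSeries b) = 1 := by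
  rw [← coeff_zero_eq_constantCoeff_apply, Phi1bSeries, coeff_mk, add_zero,
    div_self (Nat.cast_ne_zero.mpr b.factorial_ne_zero)]

theorem phi1bSeries_ne_zero (b : ℕ) : Phi1bSeries b ≠ 0 := fun h => by
  simpa [h] using constantCoeff_phi1bSeries b

section Dilcher

variable {b : ℕ} {x : ℝ} {Q : ℕ → ℝ}

theorem eq_sum_choose_of_egf_mul_phi1bSeries {P : ℕ → ℝ}
    (hP : egf P * Phi1bSeries b = egf fun n => (x + 1) ^ n)
    (hQ : egf Q * Phi1bSeries b = egf fun n => x ^ n) (k : ℕ) :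
    P k = ∑ p ∈ range (k + 1), (k.choose p : ℝ) * Q (k - p) := by
  have hPQ : egf P = (egf fun n => (1 : ℝ) ^ n) * egf Q :=
    mul_right_cancel₀ (phi1bSeries_ne_zero b) (by rw [hP, add_comm, egf_add_pow, mul_assoc, hQ])
  rw [egf_mul_egf] at hPQ
  simp only [one_pow, mul_one] at hPQ
  exact congrFun (egf_injective hPQ) k

theorem sum_choose_add_of_egf_mul_phi1bSeries
    (hQ : egf Q * Phi1bSeries b = egf fun n => x ^ n) (n : ℕ) :
    ∑ i ∈ range (n + 1), ((b + n).choose (b + i) : ℝ) * Q (n - i) =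
      ((b + n).choose b : ℝ) * x ^ n := by
  have hn := congrArg (coeff n) hQ
  rw [mul_comm, coeff_mul, Phi1bSeries, egf, egf,
    Nat.sum_antidiagonal_eq_sum_range_succ (fun i j => coeff i _ * coeff j _)] at hn
  simp only [coeff_mk] at hn
  have hb : (b.factorial : ℝ) ≠ 0 := Nat.cast_ne_zero.mpr b.factorial_ne_zero
  have hx : ((b + n).choose b : ℝ) * x ^ n =
      ((b + n).factorial / b.factorial : ℝ) * (x ^ n / n.factorial) := by
    rw [Nat.cast_choose ℝ (Nat.le_add_right b n), Nat.add_sub_cancel_left]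
    field_simp
  rw [hx, ← hn, mul_sum]
  refine sum_congr rfl fun i hi => ?_
  have hin := mem_range_succ_iff.mp hi
  rw [Nat.cast_choose ℝ (by omega : b + i ≤ b + n), show b + n - (b + i) = n - i by omega]
  field_simp

end Dilcher

theorem stmt_14_general (b : ℕ) (x : ℝ) (P Q : ℕ → ℝ)
    (hP : PowerSeries.mk (fun n => P n / n.factorial) * Phi1bSeries b =
          PowerSeries.mk (fun n => (x + 1) ^ n / n.factorial))
    (hQ : PowerSeries.mk (fun n => Q n / n.factorial) * Phi1bSeries b =
          PowerSeries.mk (fun n => x ^ n / n.factorial)) :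
    ∀ k : ℕ, b ≤ k →
      P k = ∑ p ∈ Finset.range b, (k.choose p : ℝ) * Q (k - p) +
        (k.choose b : ℝ) * x ^ (k - b) := by
  intro k hk
  obtain ⟨n, rfl⟩ := Nat.exists_eq_add_of_le hk
  rw [eq_sum_choose_of_egf_mul_phi1bSeries hP hQ, add_assoc, sum_range_add, Nat.add_sub_cancel_left,
    ← sum_choose_add_of_egf_mul_phi1bSeries hQ n]
  congr 1
  exact sum_congr rfl fun i _ => by rw [Nat.add_sub_add_left]

/-- Dilcher's recursion `B_k^{(b)}(x+1) = Σ_{p<b} C(k,p) B_{k−p}^{(b)}(x) + C(k,b) x^{k−b}`,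
where `P n = B_n^{(b)}(x+1)` and `Q n = B_n^{(b)}(x)` are encoded via the generating
function `Σ_n B_n^{(b)}(y) z^n/n! = e^{yz}/Φ_{1,b}(z)`. -/
theorem stmt_14 (b : ℕ) (hb : 1 ≤ b) (x : ℝ) (P Q : ℕ → ℝ)
    (hP : PowerSeries.mk (fun n => P n / n.factorial) * Phi1bSeries b =
          PowerSeries.mk (fun n => (x + 1) ^ n / n.factorial))
    (hQ : PowerSeries.mk (fun n => Q n / n.factorial) * Phi1bSeries b =
          PowerSeries.mk (fun n => x ^ n / n.factorial)) :
    ∀ k : ℕ, b ≤ k →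
      P k = ∑ p ∈ Finset.range b, (k.choose p : ℝ) * Q (k - p) +
        (k.choose b : ℝ) * x ^ (k - b) :=
  stmt_14_general b x P Q hP hQ
end

section
/- For positive integers a, b, the formal power series f(z) = Φ_{a,b+1}(z)/Φ_{a,b}(z) (quotient of the two Kummer series, well-defined since Φ_{a,b}(0)=1) satisfies the Riccati-type differential equation z f'(z) = (a+b)(1 − f(z)) − z f(z) + (b/(a+b)) z f(z)². -/
/-!
The contiguous relations `Φ'_{a,b} = Φ_{a,b} − (b/(a+b)) Φ_{a,b+1}` and
`z Φ'_{a,b+1} = (a+b)(Φ_{a,b} − Φ_{a,b+1})` hold coefficientwise, by the Pochhammer identity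
`(c+1)_k c = (c)_{k+1} = (c)_k (c+k)`. Differentiating `f Φ_{a,b} = Φ_{a,b+1}` and substituting
them yields the Riccati equation multiplied by `Φ_{a,b}`, which can be cancelled because its
constant term is `1`.
-/

open PowerSeries

/-- The formal power series of the Kummer function `Φ_{a,b}(z) = ₁F₁(a; a+b; z)`. -/
noncomputable def PhiSeries (a b : ℝ) : PowerSeries ℝ :=
  PowerSeries.mk fun k =>
    (∏ j ∈ Finset.range k, (a + j)) / (∏ j ∈ Finset.range k, (a + b + j)) /
      (k.factorial : ℝ)

lemma prod_range_add_one_add_mul (c : ℝ) (k : ℕ) :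
    (∏ j ∈ Finset.range k, (c + 1 + j)) * c = (∏ j ∈ Finset.range k, (c + j)) * (c + k) := by
  rw [← Finset.prod_range_succ (fun j : ℕ => c + j), Finset.prod_range_succ']
  push_cast
  simp only [add_zero, add_assoc, add_comm (1 : ℝ)]

lemma prod_range_add_ne_zero {c : ℝ} (hc : ∀ n : ℕ, c + n ≠ 0) (k : ℕ) :
    ∏ j ∈ Finset.range k, (c + j) ≠ 0 :=
  Finset.prod_ne_zero_iff.mpr fun j _ => hc j

lemma coeff_phiSeries (a b : ℝ) (k : ℕ) :
    coeff k (PhiSeries a b) =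
      (∏ j ∈ Finset.range k, (a + j)) / (∏ j ∈ Finset.range k, (a + b + j)) / k.factorial :=
  coeff_mk _ _

lemma constantCoeff_phiSeries (a b : ℝ) : constantCoeff (PhiSeries a b) = 1 := by
  simp [← coeff_zero_eq_constantCoeff_apply, coeff_phiSeries]

lemma phiSeries_ne_zero (a b : ℝ) : PhiSeries a b ≠ 0 := fun h => by
  simpa [h] using constantCoeff_phiSeries a b

lemma coeff_succ_phiSeries_mul (a b : ℝ) (k : ℕ) :
    coeff (k + 1) (PhiSeries a b) * (k + 1) = coeff k (PhiSeries a b) * (a + k) / (a + b + k) := by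
  simp only [coeff_phiSeries, Finset.prod_range_succ, Nat.factorial_succ]
  push_cast
  field_simp

lemma coeff_phiSeries_add_one_mul {a b : ℝ} (hab : ∀ n : ℕ, a + b + n ≠ 0) (k : ℕ) :
    coeff k (PhiSeries a (b + 1)) * (a + b + k) = coeff k (PhiSeries a b) * (a + b) := by
  have hP := prod_range_add_ne_zero hab k
  have hP₁ := prod_range_add_ne_zero (c := a + b + 1) 
    (fun n => by convert hab (n + 1) using 1; push_cast; ring) k
  have key := prod_range_add_one_add_mul (a + b) k
  simp only [coeff_phiSeries, ← add_assoc]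
  field_simp
  linear_combination -(∏ j ∈ Finset.range k, (a + j)) * key

lemma coeff_X_mul_derivative {R : Type*} [CommSemiring R] (f : R⟦X⟧) (k : ℕ) :
    coeff k (X * d⁄dX R f) = k * coeff k f := by
  cases k with
  | zero => simp
  | succ k => rw [coeff_succ_X_mul, coeff_derivative, mul_comm, Nat.cast_succ]

lemma derivative_phiSeries {a b : ℝ} (hab : ∀ n : ℕ, a + b + n ≠ 0) :
    d⁄dX ℝ (PhiSeries a b) = PhiSeries a b - C (b / (a + b)) * PhiSeries a (b + 1) := by
  ext k
  have hshift := coeff_phiSeries_add_one_mul hab k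
  have hc : a + b ≠ 0 := by simpa using hab 0
  have hk := hab k
  rw [coeff_derivative, coeff_succ_phiSeries_mul, map_sub, coeff_C_mul]
  field_simp
  linear_combination b * hshift

lemma X_mul_derivative_phiSeries_add_one {a b : ℝ} (hab : ∀ n : ℕ, a + b + n ≠ 0) :
    X * d⁄dX ℝ (PhiSeries a (b + 1)) = C (a + b) * (PhiSeries a b - PhiSeries a (b + 1)) := by
  ext k
  rw [coeff_X_mul_derivative, coeff_C_mul, map_sub]
  linear_combination coeff_phiSeries_add_one_mul hab k

theorem X_mul_derivative_eq_of_mul_phiSeries {a b : ℝ} (hab : ∀ n : ℕ, a + b + n ≠ 0)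
    {f : ℝ⟦X⟧} (hf : f * PhiSeries a b = PhiSeries a (b + 1)) :
    X * d⁄dX ℝ f = C (a + b) * (1 - f) - X * f + C (b / (a + b)) * (X * f ^ 2) := by
  have hleibniz : d⁄dX ℝ f * PhiSeries a b + f * d⁄dX ℝ (PhiSeries a b) =
      d⁄dX ℝ (PhiSeries a (b + 1)) := by
    rw [← hf, Derivation.leibniz, smul_eq_mul, smul_eq_mul]
    ring
  refine mul_right_cancel₀ (phiSeries_ne_zero a b) ?_
  linear_combination X * hleibniz + X_mul_derivative_phiSeries_add_one hab
    - X * f * derivative_phiSeries hab + (C (a + b) - C (b / (a + b)) * X * f) * hf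

theorem stmt_17_general (a b : ℕ) (ha : 1 ≤ a) (f : PowerSeries ℝ)
    (hf : f * PhiSeries a b = PhiSeries a (b + 1)) :
    PowerSeries.X * PowerSeries.derivativeFun f =
      PowerSeries.C ((a : ℝ) + b) * (1 - f) - PowerSeries.X * f +
        PowerSeries.C ((b : ℝ) / ((a : ℝ) + b)) * (PowerSeries.X * f ^ 2) := by
  have hab (n : ℕ) : (a : ℝ) + b + n ≠ 0 := by positivity
  exact X_mul_derivative_eq_of_mul_phiSeries hab hf

/-- The quotient `f = Φ_{a,b+1}/Φ_{a,b}` satisfies the Riccati-type equation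
`z f' = (a+b)(1 − f) − z f + (b/(a+b)) z f²`. -/
theorem stmt_17 (a b : ℕ) (ha : 1 ≤ a) (hb : 1 ≤ b) (f : PowerSeries ℝ)
    (hf : f * PhiSeries a b = PhiSeries a (b + 1)) :
    PowerSeries.X * PowerSeries.derivativeFun f =
      PowerSeries.C ((a : ℝ) + b) * (1 - f) - PowerSeries.X * f +
        PowerSeries.C ((b : ℝ) / ((a : ℝ) + b)) * (PowerSeries.X * f ^ 2) :=
  stmt_17_general a b ha f hf
end
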